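/- arXiv:2409.10082 — 3 statements merged into one kernel-verified Lean document; each statement's English description precedes it below -/
import Mathlib

section
/- For each τ ∈ ℍ, the map sending [a,b] ∈ (ℝ² \ {0})/±1 to the tangent vector −(a + bτ)²/ℓ_{[a,b]}(τ) ∈ ℂ ≅ T_τℍ is a bijection from (ℝ² \ {0})/±1 onto ℂ \ {0}; that is, for every nonzero ξ ∈ ℂ there exists (a,b) ∈ ℝ², unique up to sign, with ξ = −(a + bτ)²/ℓ_{[a,b]}(τ). -/
/-! Writing `z = a + bτ`, the equation `ξ = -z² / (‖z‖ / √(Im τ))` forces `‖z‖ = ‖ξ‖ / √(Im τ)`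
and is then equivalent to `z² = -ξ‖ξ‖ / Im τ`. For `ξ ≠ 0` this nonzero number has exactly
two square roots `±z`, and since `1, τ` is a real basis of `ℂ`, each of them is `a + bτ` for
exactly one pair `(a, b)`. -/

namespace Complex

variable {τ : ℂ}

theorem exists_ofReal_add_ofReal_mul_eq (hτ : τ.im ≠ 0) (z : ℂ) :
    ∃ a b : ℝ, (a : ℂ) + b * τ = z :=
  ⟨z.re - z.im / τ.im * τ.re, z.im / τ.im, by apply Complex.ext <;> simp; field_simp⟩

theorem ofReal_add_ofReal_mul_inj (hτ : τ.im ≠ 0) {a b a' b' : ℝ} :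
    (a : ℂ) + b * τ = a' + b' * τ ↔ (a, b) = (a', b') := by
  refine ⟨fun h => ?_, fun h => by simp_all⟩
  have him : b * τ.im = b' * τ.im := by simpa using congrArg Complex.im h
  have hb : b = b' := mul_right_cancel₀ hτ him
  have hre : a + b * τ.re = a' + b' * τ.re := by simpa using congrArg Complex.re h
  rw [hb] at hre ⊢
  simpa using hre

variable {c : ℝ} {z ξ : ℂ}

theorem norm_eq_mul_norm_of_eq_neg_sq_div (hc : 0 < c) (h : ξ = -z ^ 2 / ((‖z‖ / c : ℝ) : ℂ)) :
    ‖ξ‖ = c * ‖z‖ := by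
  rcases eq_or_ne z 0 with rfl | hz
  · simp [h]
  rw [h, norm_div, norm_neg, norm_pow, norm_real, Real.norm_of_nonneg (by positivity)]
  field_simp

theorem norm_eq_mul_norm_of_sq_eq (hc : 0 < c) (h : z ^ 2 = -ξ * ‖ξ‖ / (c ^ 2 : ℝ)) :
    ‖ξ‖ = c * ‖z‖ := by
  have hsq : (c * ‖z‖) ^ 2 = ‖ξ‖ ^ 2 := by
    have := congrArg (‖·‖) h
    simp only [norm_pow, norm_div, norm_mul, norm_neg, norm_real, Real.norm_eq_abs,
      abs_norm] at this
    rw [mul_pow, this, abs_of_pos (by positivity)]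
    field_simp
  exact ((pow_left_inj₀ (by positivity) (by positivity) two_ne_zero).1 hsq).symm

-- At `z = 0` both sides say `ξ = 0`, the left one because `x / 0 = 0` in `ℂ`.
theorem eq_neg_sq_div_norm_div_iff (hc : 0 < c) :
    ξ = -z ^ 2 / ((‖z‖ / c : ℝ) : ℂ) ↔ z ^ 2 = -ξ * ‖ξ‖ / (c ^ 2 : ℝ) := by
  suffices h : ‖ξ‖ = c * ‖z‖ →
      (ξ = -z ^ 2 / ((‖z‖ / c : ℝ) : ℂ) ↔ z ^ 2 = -ξ * ‖ξ‖ / (c ^ 2 : ℝ)) from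
    ⟨fun hξ => (h (norm_eq_mul_norm_of_eq_neg_sq_div hc hξ)).1 hξ,
      fun hz => (h (norm_eq_mul_norm_of_sq_eq hc hz)).2 hz⟩
  intro hnorm
  rcases eq_or_ne z 0 with rfl | hz
  · simp_all
  have hc' : ((‖z‖ / c : ℝ) : ℂ) ≠ 0 := by exact_mod_cast (div_pos (norm_pos_iff.2 hz) hc).ne'
  have hw : -ξ * ((c * ‖z‖ : ℝ) : ℂ) / ((c ^ 2 : ℝ) : ℂ) = -(ξ * ((‖z‖ / c : ℝ) : ℂ)) := by
    have : (c : ℂ) ≠ 0 := by exact_mod_cast hc.ne'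
    push_cast
    field_simp
  rw [eq_div_iff hc', hnorm, hw]
  exact ⟨fun h => by linear_combination h, fun h => by linear_combination h⟩

end Complex

/-- For each `τ ∈ ℍ`, the map `[a,b] ↦ −(a + bτ)²/ℓ_{[a,b]}(τ)` is a bijection
from `(ℝ² \ {0})/±1` onto `ℂ \ {0}`: every nonzero `ξ ∈ ℂ` is the horocyclic
vector of some `(a,b) ≠ (0,0)`, uniquely up to sign. Here
`ℓ_{[a,b]}(τ) = |a + bτ|/√(Im τ)`. -/
theorem horocyclic_vector_bijection (τ : ℂ) (hτ : 0 < τ.im)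
    (ξ : ℂ) (hξ : ξ ≠ 0) :
    ∃ a b : ℝ, (a, b) ≠ (0, 0) ∧
      ξ = -((a:ℂ) + (b:ℂ) * τ)^2 / (‖(a:ℂ) + (b:ℂ) * τ‖ / Real.sqrt τ.im : ℝ) ∧
      ∀ a' b' : ℝ, (a', b') ≠ (0, 0) →
        ξ = -((a':ℂ) + (b':ℂ) * τ)^2
              / (‖(a':ℂ) + (b':ℂ) * τ‖ / Real.sqrt τ.im : ℝ) →
        (a', b') = (a, b) ∨ (a', b') = (-a, -b) := by
  have hs : 0 < √τ.im := Real.sqrt_pos.2 hτ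
  obtain ⟨z, hz⟩ := IsAlgClosed.exists_pow_nat_eq (-ξ * ‖ξ‖ / ((√τ.im ^ 2 : ℝ) : ℂ)) two_pos
  obtain ⟨a, b, rfl⟩ := Complex.exists_ofReal_add_ofReal_mul_eq hτ.ne' z
  refine ⟨a, b, fun hab => ?_, (Complex.eq_neg_sq_div_norm_div_iff hs).2 hz,
    fun a' b' _ h' => ?_⟩
  · obtain ⟨rfl, rfl⟩ := Prod.mk.inj hab
    rw [eq_comm] at hz
    simp [hξ, hs.ne'] at hz
  · have hsq := ((Complex.eq_neg_sq_div_norm_div_iff hs).1 h').trans hz.symm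
    rcases sq_eq_sq_iff_eq_or_eq_neg.1 hsq with h | h
    · exact .inl ((Complex.ofReal_add_ofReal_mul_inj hτ.ne').1 h)
    · refine .inr ((Complex.ofReal_add_ofReal_mul_inj hτ.ne').1 ?_)
      rw [h]
      push_cast
      ring
end

section
/- In Fenchel–Nielsen coordinates on the torus Teichmüller space, the Weil–Petersson Kähler form satisfies Wolpert's formula: with ℓ = 1/√v and t = −u/√v (where τ = u + iv ∈ ℍ), one has dt ∧ dℓ = (du ∧ dv)/(2v²) = ω_WP. -/
/-! Since `ℓ` does not depend on `u`, the term `∂t/∂v · ∂ℓ/∂u` vanishes, and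
`dt ∧ dℓ = ∂t/∂u · ∂ℓ/∂v = (-1/√v) · (-1/(2v√v)) = 1/(2v²)`. -/

theorem Real.hasDerivAt_one_div_sqrt {x : ℝ} (hx : 0 < x) :
    HasDerivAt (fun y => 1 / √y) (-1 / (2 * x * √x)) x := by
  have hs : √x ≠ 0 := (Real.sqrt_pos.mpr hx).ne'
  refine ((hasDerivAt_const x (1 : ℝ)).div (Real.hasDerivAt_sqrt hx.ne') hs).congr_deriv ?_
  rw [Real.sq_sqrt hx.le]
  field_simp
  ring

/-- Wolpert's formula on the torus Teichmüller space: with Fenchel–Nielsen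
functions `ℓ(u,v) = 1/√v` and `t(u,v) = −u/√v` on `ℍ` (coordinates
`τ = u + iv`, `v > 0`), the wedge `dt ∧ dℓ`, whose coefficient is
`(∂t/∂u)(∂ℓ/∂v) − (∂t/∂v)(∂ℓ/∂u)`, equals the Weil–Petersson form coefficient
`1/(2v²)` of `ω_WP = (du ∧ dv)/(2v²)`. -/
theorem wolpert_formula_torus (u v : ℝ) (hv : 0 < v) :
    (deriv (fun u' : ℝ => -u' / Real.sqrt v) u)
        * (deriv (fun v' : ℝ => 1 / Real.sqrt v') v)
      - (deriv (fun v' : ℝ => -u / Real.sqrt v') v)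
        * (deriv (fun u' : ℝ => (1 : ℝ) / Real.sqrt v) u)
      = 1 / (2 * v^2) := by
  have ht_u : HasDerivAt (fun u' : ℝ => -u' / √v) (-1 / √v) u :=
    (hasDerivAt_id u).neg.div_const _
  rw [ht_u.deriv, (Real.hasDerivAt_one_div_sqrt hv).deriv, deriv_const, mul_zero, sub_zero]
  have hs : √v ≠ 0 := (Real.sqrt_pos.mpr hv).ne'
  field_simp
  exact (Real.sq_sqrt hv.le).symm
end

section
/- The horocyclic deformations along a fixed measured foliation form a flow: for all τ ∈ ℍ, real s, t, and (a,b) ∈ ℝ² \ {0}, E_{sλ_{[a,b]}}(E_{tλ_{[a,b]}}(τ)) = E_{(s+t)λ_{[a,b]}}(τ), where E_{tλ_{[a,b]}}(τ) = ((1 − tab/ℓ(τ))τ − ta²/ℓ(τ))/((tb²/ℓ(τ))τ + 1 + tab/ℓ(τ)) and ℓ(τ) = |a+bτ|/√(Im τ). -/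
/-!
`E_{tλ}` is the Möbius action of `1 + (t/ℓ) N` with `N = !![-ab, -a²; b², ab]`. Since `N² = 0`,
`x ↦ 1 + x N` is a one-parameter subgroup of `SL(2, ℝ)`. Moreover `ℓ_{(a,b)}(g τ)` is the flat
length of `τ` for the transformed covector `(a, b) ↦ (a g₁₁ + b g₀₁, a g₁₀ + b g₀₀)`, which `1 + x N`
fixes; so `ℓ` is constant along each orbit and both steps use the same rescaled time.
-/

/-- The flat length `ℓ_{[a,b]}(τ) = |a + bτ|/√(Im τ)`. -/
noncomputable def torusLength (a b : ℝ) (τ : ℂ) : ℝ :=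
  ‖(a : ℂ) + (b : ℂ) * τ‖ / Real.sqrt τ.im

/-- The horocyclic deformation at time `t` along `λ_{[a,b]}`. -/
noncomputable def horocyclicDeformation (a b t : ℝ) (τ : ℂ) : ℂ :=
  ((1 - (t : ℂ) * a * b / (torusLength a b τ : ℝ)) * τ
      - (t : ℂ) * (a : ℂ)^2 / (torusLength a b τ : ℝ))
    / (((t : ℂ) * (b : ℂ)^2 / (torusLength a b τ : ℝ)) * τ
      + 1 + (t : ℂ) * a * b / (torusLength a b τ : ℝ))

open UpperHalfPlane Matrix
open scoped MatrixGroups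

def horocyclicMatrix (a b x : ℝ) : SL(2, ℝ) :=
  ⟨!![1 - x * a * b, -(x * a ^ 2); x * b ^ 2, 1 + x * a * b], by
    rw [det_fin_two_of]; ring⟩

lemma horocyclicMatrix_add (a b x y : ℝ) :
    horocyclicMatrix a b (x + y) = horocyclicMatrix a b x * horocyclicMatrix a b y := by
  refine Subtype.ext ?_
  change _ = !![_, _; _, _] * !![_, _; _, _]
  rw [mul_fin_two, horocyclicMatrix]
  ext i j
  fin_cases i <;> fin_cases j <;> simp <;> ring

lemma coe_specialLinearGroup_smul (g : SL(2, ℝ)) (z : ℍ) :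
    (↑(g • z) : ℂ) = (g 0 0 * z + g 0 1) / (g 1 0 * z + g 1 1) := by
  simpa using coe_specialLinearGroup_apply g z

lemma im_specialLinearGroup_smul (g : SL(2, ℝ)) (z : ℍ) :
    (g • z).im = z.im / Complex.normSq (g 1 0 * z + g 1 1) := by
  rw [MulAction.compHom_smul_def, UpperHalfPlane.im_smul_eq_div_normSq]
  simp [denom]

lemma torusLength_smul (a b : ℝ) (g : SL(2, ℝ)) (z : ℍ) :
    torusLength a b ↑(g • z) =
      torusLength (a * g 1 1 + b * g 0 1) (a * g 1 0 + b * g 0 0) z := by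
  set D : ℂ := g 1 0 * z + g 1 1
  have hD : D ≠ 0 := by simpa [denom] using denom_ne_zero (SpecialLinearGroup.mapGL ℝ g) z
  have hnum : (a : ℂ) + b * ↑(g • z) =
      (((a * g 1 0 + b * g 0 0 : ℝ) : ℂ) * z + (a * g 1 1 + b * g 0 1 : ℝ)) / D := by
    rw [coe_specialLinearGroup_smul, eq_div_iff hD, add_mul, mul_assoc, div_mul_cancel₀ _ hD]
    push_cast
    ring
  have him : (↑(g • z) : ℂ).im = (z : ℂ).im / ‖D‖ ^ 2 := by
    simpa only [coe_im, Complex.sq_norm] using im_specialLinearGroup_smul g z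
  have hsqrt : Real.sqrt ((z : ℂ).im / ‖D‖ ^ 2) = Real.sqrt (z : ℂ).im / ‖D‖ := by
    rw [Real.sqrt_div' _ (sq_nonneg _), Real.sqrt_sq (norm_nonneg _)]
  have hz : Real.sqrt (z : ℂ).im ≠ 0 := (Real.sqrt_pos.2 z.im_pos).ne'
  rw [torusLength, torusLength, hnum, him, hsqrt, norm_div]
  field_simp [norm_ne_zero_iff.2 hD]
  rw [add_comm]

lemma torusLength_horocyclicMatrix_smul (a b x : ℝ) (z : ℍ) :
    torusLength a b ↑(horocyclicMatrix a b x • z) = torusLength a b z := by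
  rw [torusLength_smul]
  congr 1 <;> simp [horocyclicMatrix] <;> ring

lemma horocyclicDeformation_eq_smul (a b t : ℝ) (z : ℍ) :
    horocyclicDeformation a b t z = ↑(horocyclicMatrix a b (t / torusLength a b z) • z) := by
  rw [coe_specialLinearGroup_smul, horocyclicDeformation]
  push_cast [horocyclicMatrix, of_apply, cons_val_zero, cons_val_one]
  congr 1 <;> ring

theorem horocyclic_deformation_flow_general (τ : ℂ) (hτ : 0 < τ.im)
    (a b : ℝ) (s t : ℝ) :
    horocyclicDeformation a b s (horocyclicDeformation a b t τ)
      = horocyclicDeformation a b (s + t) τ := by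
  let z : ℍ := ⟨τ, hτ⟩
  change horocyclicDeformation a b s (horocyclicDeformation a b t z) =
    horocyclicDeformation a b (s + t) z
  rw [horocyclicDeformation_eq_smul a b t, horocyclicDeformation_eq_smul a b s,
    torusLength_horocyclicMatrix_smul, smul_smul, ← horocyclicMatrix_add,
    horocyclicDeformation_eq_smul, add_div]

/-- The horocyclic deformations along a fixed measured foliation form a flow:
`E_{sλ_{[a,b]}} ∘ E_{tλ_{[a,b]}} = E_{(s+t)λ_{[a,b]}}`. -/
theorem horocyclic_deformation_flow (τ : ℂ) (hτ : 0 < τ.im)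
    (a b : ℝ) (hab : (a, b) ≠ (0, 0)) (s t : ℝ) :
    horocyclicDeformation a b s (horocyclicDeformation a b t τ)
      = horocyclicDeformation a b (s + t) τ :=
  horocyclic_deformation_flow_general τ hτ a b s t
end
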